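/- Let V be a CFT-type vertex operator algebra satisfying the C₂-cofiniteness condition and M a subspace with C₂(V) ⊆ M and 𝟙 ∉ M. Then M is a Mathieu-Zhao subspace of V with respect to the 0-th and (-1)-th products, and r_{0,-1}(M) = ⊕_{n=1}^∞ V_n. -/

import Mathlib

/-!
`C₂(V)` absorbs the `0`-th and `(-1)`-th products on either side, and skew symmetry gives
`v₀v ∈ C₂(V)`; as `v₀` is a derivation of the `(-1)`-th product, a word in `v` with indices `0`
and `-1` lies in `C₂(V)` unless it is a `(-1)`-power of `v`. As `C₂(V)` is graded of finite
codimension, it contains `V_n` for all large `n`, so all high powers of an element of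
`V₊ = ⨁_{n ≥ 1} V_n` lie in `C₂(V) ⊆ M`, which puts `V₊` into the strong radical. Conversely, if
`v = c𝟙 + y` with `y ∈ V₊`, `c ≠ 0` were in the radical, the high powers of both `v` and `y`
would lie in `M`; since `X ^ m` and `(X - c) ^ n` are coprime, `𝟙` is a combination of such
powers, contradicting `𝟙 ∉ M`.
-/

open scoped BigOperators

noncomputable section

/-- The generalized binomial coefficient `p choose i` for `p : ℤ`, as a complex number. -/
def zchoose (p : ℤ) (i : ℕ) : ℂ :=
  (∏ j ∈ Finset.range i, ((p : ℂ) - (j : ℂ))) / (i.factorial : ℂ)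

/-- A vertex algebra over `ℂ`: a bilinear system of modes `u ↦ u_n`, a vacuum vector `𝟙`,
truncation, vacuum/creation axioms and the Borcherds (Jacobi) identity. -/
structure VertexAlgebra (V : Type) [AddCommGroup V] [Module ℂ V] where
  mode : V → ℤ → V → V
  one : V
  mode_add_left : ∀ (u v : V) (n : ℤ) (w : V), mode (u + v) n w = mode u n w + mode v n w
  mode_smul_left : ∀ (c : ℂ) (u : V) (n : ℤ) (w : V), mode (c • u) n w = c • mode u n w
  mode_add_right : ∀ (u : V) (n : ℤ) (v w : V), mode u n (v + w) = mode u n v + mode u n w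
  mode_smul_right : ∀ (u : V) (n : ℤ) (c : ℂ) (v : V), mode u n (c • v) = c • mode u n v
  trunc : ∀ u v : V, ∃ N : ℤ, ∀ n ≥ N, mode u n v = 0
  vacuum_left : ∀ (n : ℤ) (v : V), mode one n v = if n = -1 then v else 0
  creation_nonneg : ∀ (u : V) (n : ℤ), 0 ≤ n → mode u n one = 0
  creation : ∀ u : V, mode u (-1) one = u
  borcherds : ∀ (u v w : V) (p q r : ℤ),
    ∑ᶠ i : ℕ, zchoose p i • mode (mode u (r + i) v) (p + q - i) w =
      ∑ᶠ i : ℕ, ((-1 : ℂ) ^ i * zchoose r i) •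
        (mode u (p + r - i) (mode v (q + i) w) -
          ((-1 : ℂ) ^ r) • mode v (q + r - i) (mode u (p + i) w))

/-- A list of mode indices all equal to `0` or `-1`. -/
def GoodIdx (ns : List ℤ) : Prop := ∀ n ∈ ns, n = 0 ∨ n = -1

namespace VertexAlgebra

variable {V : Type} [AddCommGroup V] [Module ℂ V] (VA : VertexAlgebra V)

/-- The translation operator `𝒟 v = v_{-2} 𝟙`. -/
def D (v : V) : V := VA.mode v (-2) VA.one

/-- `C₂(V) = span_ℂ { u_{-2} v }`. -/
def C2 : Submodule ℂ V := Submodule.span ℂ {w : V | ∃ u v : V, w = VA.mode u (-2) v}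

/-- `Cₙ(V) = span_ℂ { u_{-n} v }`. -/
def Cn (n : ℕ) : Submodule ℂ V :=
  Submodule.span ℂ {w : V | ∃ u v : V, w = VA.mode u (-(n : ℤ)) v}


/-- The iterated word `a_{n₁} a_{n₂} ⋯ a_{n_t} a`. -/
def word (a : V) (ns : List ℤ) : V := ns.foldr (fun n acc => VA.mode a n acc) a

/-- The radical `r_{0,-1}(M)` of a subspace `M` with respect to the 0-th and (-1)-th products. -/
def rad (M : Set V) : Set V :=
  {v : V | ∃ m : ℕ, ∀ ns : List ℤ, GoodIdx ns → m ≤ ns.length → VA.word v ns ∈ M}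

/-- The left-strong radical `lsr_{0,-1}(M)`. -/
def lsrad (M : Set V) : Set V :=
  {v : V | ∀ b : V, ∃ m : ℕ, ∀ (ns : List ℤ) (s : ℤ), GoodIdx ns → m ≤ ns.length →
    (s = 0 ∨ s = -1) → VA.mode b s (VA.word v ns) ∈ M}

/-- The right-strong radical `rsr_{0,-1}(M)`. -/
def rsrad (M : Set V) : Set V :=
  {v : V | ∀ w : V, ∃ m : ℕ, ∀ (ns : List ℤ) (s : ℤ), GoodIdx ns → m ≤ ns.length →
    (s = 0 ∨ s = -1) → VA.mode (VA.word v ns) s w ∈ M}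

/-- The strong radical `sr_{0,-1}(M) = lsr_{0,-1}(M) ∩ rsr_{0,-1}(M)`. -/
def srad (M : Set V) : Set V := VA.lsrad M ∩ VA.rsrad M

/-- `M` is a Mathieu-Zhao subspace of `V` with respect to the 0-th and (-1)-th products. -/
def IsMZ (M : Set V) : Prop := VA.rad M = VA.srad M

/-- A (two-sided) ideal of a vertex algebra. -/
def IsIdeal (I : Submodule ℂ V) : Prop :=
  ∀ (v w : V) (n : ℤ), w ∈ I → VA.mode v n w ∈ I ∧ VA.mode w n v ∈ I

/-- `t`-th power of `a` under the (-1)-th product: `a_{-1}(a_{-1}(⋯ a))`, with `pow a 0 = 𝟙`. -/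
def pow (a : V) (t : ℕ) : V :=
  Nat.rec VA.one (fun _ acc => VA.mode a (-1) acc) t

end VertexAlgebra

/-- A homomorphism of vertex algebras: a linear map preserving all modes and the vacuum. -/
def VertexAlgebra.IsHom {V W : Type} [AddCommGroup V] [Module ℂ V] [AddCommGroup W]
    [Module ℂ W] (VA : VertexAlgebra V) (WA : VertexAlgebra W) (f : V →ₗ[ℂ] W) : Prop :=
  f VA.one = WA.one ∧ ∀ (u v : V) (n : ℤ), f (VA.mode u n v) = WA.mode (f u) n (f v)

/-- A vertex operator algebra: a `ℤ`-graded vertex algebra with finite-dimensional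
pieces, grading bounded below, and a conformal vector `ω` whose modes `L(n) = ω_{n+1}`
satisfy the Virasoro relations, give the grading by `L(0)`, and realize `L(-1) = 𝒟`. -/
structure VertexOperatorAlgebra (V : Type) [AddCommGroup V] [Module ℂ V]
    extends VertexAlgebra V where
  grade : ℤ → Submodule ℂ V
  internal : DirectSum.IsInternal grade
  one_mem : one ∈ grade 0
  mode_grade : ∀ {k m n : ℤ} {u w : V}, u ∈ grade k → w ∈ grade n →
    mode u m w ∈ grade (k + n - m - 1)
  fin_dim : ∀ n : ℤ, FiniteDimensional ℂ (grade n)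
  bounded_below : ∃ n₀ : ℤ, ∀ n < n₀, grade n = ⊥
  omega : V
  omega_mem : omega ∈ grade 2
  central_charge : ℂ
  virasoro : ∀ (m n : ℤ) (v : V),
    mode omega (m + 1) (mode omega (n + 1) v) - mode omega (n + 1) (mode omega (m + 1) v) =
      ((m : ℂ) - (n : ℂ)) • mode omega (m + n + 1) v +
        (if m + n = 0 then (((m : ℂ) ^ 3 - (m : ℂ)) / 12) * central_charge else 0) • v
  L0_grading : ∀ (n : ℤ) (v : V), v ∈ grade n → mode omega 1 v = (n : ℂ) • v
  L_neg1 : ∀ v : V, mode omega 0 v = mode v (-2) one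

open Polynomial in
theorem Submodule.mem_of_forall_pow_apply_mem {K V : Type*} [Field K] [AddCommGroup V]
    [Module K V] (p : Submodule K V) (f : Module.End K V) {c : K} (hc : c ≠ 0) {x : V}
    {m n : ℕ} (hf : ∀ k, m ≤ k → (f ^ k) x ∈ p) (hg : ∀ k, n ≤ k → ((f - c • 1) ^ k) x ∈ p) :
    x ∈ p := by
  let S : Module.End K V → Submodule K V := fun g => ⨅ k : ℕ, p.comap (g ^ k)
  have mem_S {g : Module.End K V} {y : V} : y ∈ S g ↔ ∀ k, (g ^ k) y ∈ p := by
    simp [S, Submodule.mem_iInf]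
  have S_le_comap (g : Module.End K V) : S g ≤ (S g).comap g := fun y hy => by
    simpa [mem_S, ← Module.End.mul_apply, ← pow_succ] using fun k => mem_S.1 hy (k + 1)
  have S_le_comap' : S (f - c • 1) ≤ (S (f - c • 1)).comap f := fun y hy => by
    rw [Submodule.mem_comap, show f y = (f - c • 1) y + c • y by simp]
    exact add_mem (S_le_comap _ hy) ((S _).smul_mem c hy)
  obtain ⟨a, b, hab⟩ : IsCoprime ((X : K[X]) ^ m) ((X - C c) ^ n) := by
    simpa using (isCoprime_X_sub_C_of_isUnit_sub (R := K) (a := 0) (b := c)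
      (by simpa using hc)).pow
  have hx : x = aeval f a ((f ^ m) x) + aeval f b (((f - c • 1) ^ n) x) := by
    have := congr(aeval f $hab x)
    simpa [Algebra.algebraMap_eq_smul_one] using this.symm
  have hfm : (f ^ m) x ∈ S f := mem_S.2 fun k => by
    simpa [← Module.End.mul_apply, ← pow_add] using hf (k + m) (by omega)
  have hgn : ((f - c • 1) ^ n) x ∈ S (f - c • 1) := mem_S.2 fun k => by
    simpa [← Module.End.mul_apply, ← pow_add] using hg (k + n) (by omega)
  rw [hx]
  exact add_mem (mem_S.1 (aeval_apply_smul_mem_of_le_comap hfm a f (S_le_comap f)) 0)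
    (mem_S.1 (aeval_apply_smul_mem_of_le_comap hgn b f S_le_comap') 0)

section HomogeneousSubmodule

open DirectSum

variable {ι K V : Type*} [DecidableEq ι] [Field K] [AddCommGroup V] [Module K V]
  (ℳ : ι → Submodule K V) [Decomposition ℳ]

theorem Submodule.isHomogeneous_span {s : Set V}
    (hs : ∀ x ∈ s, ∀ i, (decompose ℳ x i : V) ∈ Submodule.span K s) :
    (Submodule.span K s).IsHomogeneous ℳ := by
  intro i x hx
  induction hx using Submodule.span_induction with
  | mem x hx => exact hs x hx i
  | zero => simp
  | add x y _ _ hx hy => simpa [decompose_add] using add_mem hx hy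
  | smul c x _ hx => simpa [decompose_smul, DirectSum.smul_apply] using Submodule.smul_mem _ c hx

theorem Submodule.IsHomogeneous.finite_setOf_not_le {p : Submodule K V}
    (hp : p.IsHomogeneous ℳ) [FiniteDimensional K (V ⧸ p)] : {i | ¬ ℳ i ≤ p}.Finite := by
  have hx : ∀ i : {i | ¬ ℳ i ≤ p}, ∃ x ∈ ℳ i, x ∉ p := fun i => SetLike.not_le_iff_exists.1 i.2
  choose x hxℳ hxp using hx
  suffices LinearIndependent K (p.mkQ ∘ x) from Set.finite_coe_iff.1 this.finite_of_isNoetherian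
  rw [linearIndependent_iff']
  intro s g hg i hi
  have hsum : ∑ j ∈ s, g j • x j ∈ p := by
    rw [← Submodule.Quotient.mk_eq_zero, ← Submodule.mkQ_apply, map_sum]
    simpa using hg
  have hcomp : (decompose ℳ (∑ j ∈ s, g j • x j) i : V) = g i • x i := by
    rw [decompose_sum, DFinsupp.finsetSum_apply, AddSubmonoidClass.coe_finsetSum,
      Finset.sum_eq_single i (fun j _ hji => ?_) (absurd hi)]
    · simp [decompose_smul, DirectSum.smul_apply, decompose_of_mem_same ℳ (hxℳ i)]
    · simp [decompose_smul, DirectSum.smul_apply,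
        decompose_of_mem_ne ℳ (hxℳ j) (Subtype.coe_injective.ne hji)]
  by_contra hgi
  have h := (AddSubmonoidClass.IsHomogeneous.mem_iff ℳ p hp).1 hsum i
  rw [hcomp] at h
  exact hxp i ((p.smul_mem_iff hgi).1 h)

end HomogeneousSubmodule

lemma zchoose_zero_right (p : ℤ) : zchoose p 0 = 1 := by simp [zchoose]

lemma zchoose_one_right (p : ℤ) : zchoose p 1 = p := by simp [zchoose]

lemma zchoose_zero_left {i : ℕ} (hi : i ≠ 0) : zchoose 0 i = 0 := by
  rw [zchoose, Finset.prod_eq_zero (Finset.mem_range.2 (Nat.pos_of_ne_zero hi)) (by simp),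
    zero_div]

namespace VertexAlgebra

variable {V : Type} [AddCommGroup V] [Module ℂ V] (VA : VertexAlgebra V)

def modeₗ (n : ℤ) : V →ₗ[ℂ] V →ₗ[ℂ] V :=
  LinearMap.mk₂ ℂ (fun u w => VA.mode u n w) (fun u v w => VA.mode_add_left u v n w)
    (fun c u w => VA.mode_smul_left c u n w) (fun u v w => VA.mode_add_right u n v w)
    (fun c u w => VA.mode_smul_right u n c w)

@[simp] lemma modeₗ_apply (n : ℤ) (u w : V) : VA.modeₗ n u w = VA.mode u n w := rfl

@[simp] lemma mode_zero_left (n : ℤ) (w : V) : VA.mode 0 n w = 0 :=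
  (VA.modeₗ n).map_zero₂ w

@[simp] lemma mode_zero_right (u : V) (n : ℤ) : VA.mode u n 0 = 0 :=
  (VA.modeₗ n u).map_zero

lemma mode_mode_zero (u v w : V) (n : ℤ) :
    VA.mode (VA.mode u 0 v) n w = VA.mode u 0 (VA.mode v n w) - VA.mode v n (VA.mode u 0 w) := by
  have h := VA.borcherds u v w 0 n 0
  rw [finsum_eq_single _ 0 (fun i hi => by rw [zchoose_zero_left hi, zero_smul]),
    finsum_eq_single _ 0 (fun i hi => by rw [zchoose_zero_left hi, mul_zero, zero_smul])] at h
  simpa [zchoose_zero_right] using h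

lemma mode_D (u : V) (p : ℤ) (w : V) : VA.mode (VA.D u) p w = -(p : ℂ) • VA.mode u (p - 1) w := by
  have h := VA.borcherds u VA.one w p 0 (-2)
  rw [finsum_eq_finsetSum_of_support_subset _ (s := Finset.range 2) (fun i hi => by
        by_contra hi2
        exact hi (by simp [VA.creation_nonneg u (-2 + i) (by simp at hi2; omega)])),
      finsum_eq_zero_of_forall_eq_zero (fun i => by
        rw [VA.vacuum_left, VA.vacuum_left, if_neg (by omega), if_neg (by omega)]
        simp)] at h
  simp only [Finset.sum_range_succ, Finset.sum_range_zero, zchoose_zero_right,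
    zchoose_one_right] at h
  norm_num [VA.creation] at h
  rw [D, neg_smul, eq_neg_iff_add_eq_zero, h]

lemma mode_neg_two_mem_C2 (u w : V) : VA.mode u (-2) w ∈ VA.C2 :=
  Submodule.subset_span ⟨u, w, rfl⟩

lemma mode_mem_C2_of_le {n : ℤ} (hn : n ≤ -2) (u w : V) : VA.mode u n w ∈ VA.C2 := by
  obtain ⟨k, rfl⟩ : ∃ k : ℕ, n = -2 - k := ⟨(-2 - n).toNat, by omega⟩
  induction k generalizing u with
  | zero => simpa using VA.mode_neg_two_mem_C2 u w
  | succ k ih =>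
    have hk : ((k : ℂ) + 2) ≠ 0 := by exact_mod_cast Nat.succ_ne_zero (k + 1)
    have h : VA.mode u (-2 - (k + 1 : ℕ)) w = ((k : ℂ) + 2)⁻¹ • VA.mode (VA.D u) (-2 - k) w := by
      rw [mode_D, smul_smul]
      push_cast
      rw [show -(-2 - (k : ℂ)) = k + 2 by ring, inv_mul_cancel₀ hk, one_smul]
      ring_nf
    rw [h]
    exact VA.C2.smul_mem _ (ih _ (by omega))

lemma finsum_mem_C2 {f : ℕ → V} (hf : ∀ i, f i ∈ VA.C2) : ∑ᶠ i, f i ∈ VA.C2 :=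
  finsum_induction (· ∈ VA.C2) VA.C2.zero_mem (fun _ _ => VA.C2.add_mem) hf

-- skew symmetry: the correction terms `(u_{r+i} v)_{-1-i} 𝟙` with `i ≥ 1` lie in `C₂(V)`
lemma mode_add_neg_one_zpow_smul_mode_mem_C2 (u v : V) (r : ℤ) :
    VA.mode u r v + ((-1 : ℂ) ^ r) • VA.mode v r u ∈ VA.C2 := by
  have h := VA.borcherds u v VA.one (-1) 0 r
  obtain ⟨N, hN⟩ := VA.trunc u v
  rw [finsum_eq_finsetSum_of_support_subset _ (s := Finset.range ((N - r).toNat + 1))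
      (fun i hi => by
        by_contra hi2
        exact hi (by simp [hN (r + i) (by simp at hi2; omega)])),
    finsum_eq_single _ 0 (fun i hi => by
      simp [VA.creation_nonneg v i (by omega), VA.creation_nonneg u (-1 + i) (by omega)]),
    Finset.sum_range_succ'] at h
  simp only [Int.reduceNeg, Nat.cast_add, Nat.cast_one, add_zero, zchoose_zero_right,
    CharP.cast_eq_zero, sub_zero, VA.creation, one_smul, _root_.pow_zero, mul_one,
    VA.creation_nonneg v 0 le_rfl, mode_zero_right, zero_add, zero_sub, smul_neg] at h
  rw [show VA.mode u r v + (-1 : ℂ) ^ r • VA.mode v r u = -∑ i ∈ Finset.range (N - r).toNat,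
      zchoose (-1) (i + 1) • VA.mode (VA.mode u (r + (i + 1)) v) (-1 - (i + 1)) VA.one by
    linear_combination (norm := abel) h]
  exact VA.C2.neg_mem (VA.C2.sum_mem fun i _ =>
    VA.C2.smul_mem _ (VA.mode_mem_C2_of_le (by omega) _ _))

lemma mode_mem_C2_of_mem_left {c : V} (hc : c ∈ VA.C2) {q : ℤ} (hq : q ≤ 0) (x : V) :
    VA.mode c q x ∈ VA.C2 := by
  suffices VA.C2 ≤ VA.C2.comap ((VA.modeₗ q).flip x) from this hc
  refine Submodule.span_le.2 ?_
  rintro _ ⟨a, b, rfl⟩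
  -- `(a_{-2} b)_q x` is a combination of `a_{-2-i} (b_{q+i} x)` and `b_{q-2-i} (a_i x)`
  have h := VA.borcherds a b x 0 q (-2)
  rw [finsum_eq_single _ 0 (fun i hi => by rw [zchoose_zero_left hi, zero_smul])] at h
  simp only [Nat.cast_zero, add_zero, zero_add, sub_zero, zchoose_zero_right, one_smul] at h
  simp only [SetLike.mem_coe, Submodule.mem_comap, LinearMap.flip_apply, modeₗ_apply, h]
  exact VA.finsum_mem_C2 fun i => VA.C2.smul_mem _ (VA.C2.sub_mem
    (VA.mode_mem_C2_of_le (by omega) _ _) (VA.C2.smul_mem _ (VA.mode_mem_C2_of_le (by omega) _ _)))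

lemma mode_mem_C2_of_mem_right {c : V} (hc : c ∈ VA.C2) {q : ℤ} (hq : q ≤ 0) (x : V) :
    VA.mode x q c ∈ VA.C2 := by
  have h := VA.C2.sub_mem (VA.mode_add_neg_one_zpow_smul_mode_mem_C2 x c q)
    (VA.C2.smul_mem ((-1 : ℂ) ^ q) (VA.mode_mem_C2_of_mem_left hc hq x))
  rwa [add_sub_cancel_right] at h

lemma mode_self_zero_mem_C2 (v : V) : VA.mode v 0 v ∈ VA.C2 := by
  have h := VA.C2.smul_mem (2 : ℂ)⁻¹ (VA.mode_add_neg_one_zpow_smul_mode_mem_C2 v v 0)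
  rwa [zpow_zero, one_smul, ← two_smul ℂ, smul_smul, inv_mul_cancel₀ two_ne_zero, one_smul] at h

@[simp] lemma pow_zero (a : V) : VA.pow a 0 = VA.one := rfl

@[simp] lemma pow_succ (a : V) (t : ℕ) : VA.pow a (t + 1) = VA.mode a (-1) (VA.pow a t) := rfl

lemma mode_zero_pow_mem_C2 (v : V) (k : ℕ) : VA.mode v 0 (VA.pow v k) ∈ VA.C2 := by
  induction k with
  | zero => simp [VA.creation_nonneg v 0 le_rfl]
  | succ k ih =>
    -- `v_0` is a derivation of the `(-1)`-th product
    have h := VA.mode_mode_zero v v (VA.pow v k) (-1)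
    rw [pow_succ, ← sub_add_cancel (VA.mode v 0 _) (VA.mode v (-1) (VA.mode v 0 (VA.pow v k))),
      ← h]
    exact VA.C2.add_mem (VA.mode_mem_C2_of_mem_left (VA.mode_self_zero_mem_C2 v) (by omega) _)
      (VA.mode_mem_C2_of_mem_right ih (by omega) v)

@[simp] lemma word_nil (a : V) : VA.word a [] = a := rfl

@[simp] lemma word_cons (a : V) (n : ℤ) (ns : List ℤ) :
    VA.word a (n :: ns) = VA.mode a n (VA.word a ns) := rfl

lemma word_replicate_neg_one (a : V) (t : ℕ) :
    VA.word a (List.replicate t (-1)) = VA.pow a (t + 1) := by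
  induction t with
  | zero => simp [VA.creation]
  | succ t ih => rw [List.replicate_succ, word_cons, ih]; rfl

lemma word_mem_C2_or_eq_pow (v : V) {ns : List ℤ} (h : GoodIdx ns) :
    VA.word v ns ∈ VA.C2 ∨ VA.word v ns = VA.pow v (ns.length + 1) := by
  induction ns with
  | nil => simp [VA.creation]
  | cons n ns ih =>
    have hn : n = 0 ∨ n = -1 := h n List.mem_cons_self
    rw [word_cons]
    rcases ih (fun m hm => h m (List.mem_cons_of_mem _ hm)) with hc | hp
    · exact .inl (VA.mode_mem_C2_of_mem_right hc (by omega) v)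
    · rcases hn with rfl | rfl
      · exact .inl (hp ▸ VA.mode_zero_pow_mem_C2 v _)
      · exact .inr (by rw [hp]; rfl)

lemma srad_subset_rad (M : Set V) : VA.srad M ⊆ VA.rad M := by
  rintro v ⟨-, hv⟩
  obtain ⟨m, hm⟩ := hv VA.one
  exact ⟨m, fun ns hns hm' => by simpa [VA.creation] using hm ns (-1) hns hm' (.inr rfl)⟩

lemma word_mem_C2_of_pow_mem_C2 {y : V} {N : ℕ} (hy : ∀ k, N ≤ k → VA.pow y k ∈ VA.C2)
    {ns : List ℤ} (hns : GoodIdx ns) (hN : N ≤ ns.length) : VA.word y ns ∈ VA.C2 :=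
  (VA.word_mem_C2_or_eq_pow y hns).elim id fun h => h ▸ hy _ (by omega)

lemma mem_srad_of_pow_mem_C2 {M : Submodule ℂ V} (hM : VA.C2 ≤ M) {y : V} {N : ℕ}
    (hy : ∀ k, N ≤ k → VA.pow y k ∈ VA.C2) : y ∈ VA.srad (M : Set V) := by
  refine ⟨fun b => ⟨N, fun ns s hns hN hs => hM ?_⟩, fun w => ⟨N, fun ns s hns hN hs => hM ?_⟩⟩
  · exact VA.mode_mem_C2_of_mem_right (VA.word_mem_C2_of_pow_mem_C2 hy hns hN)
      (by rcases hs with rfl | rfl <;> omega) b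
  · exact VA.mode_mem_C2_of_mem_left (VA.word_mem_C2_of_pow_mem_C2 hy hns hN)
      (by rcases hs with rfl | rfl <;> omega) w

lemma pow_eq_modeₗ_pow_apply (a : V) (t : ℕ) : VA.pow a t = (VA.modeₗ (-1) a ^ t) VA.one := by
  induction t with
  | zero => rfl
  | succ t ih => rw [pow_succ, ih, _root_.pow_succ', Module.End.mul_apply, modeₗ_apply]

lemma modeₗ_neg_one_smul_one_add (c : ℂ) (y : V) :
    VA.modeₗ (-1) (c • VA.one + y) = VA.modeₗ (-1) y + c • 1 := by
  ext x
  simp [VA.vacuum_left, add_comm]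

lemma one_mem_of_pow_mem {M : Submodule ℂ V} {c : ℂ} (hc : c ≠ 0) {y : V} {m n : ℕ}
    (hv : ∀ k, m ≤ k → VA.pow (c • VA.one + y) k ∈ M) (hy : ∀ k, n ≤ k → VA.pow y k ∈ M) :
    VA.one ∈ M := by
  refine M.mem_of_forall_pow_apply_mem (VA.modeₗ (-1) (c • VA.one + y)) hc (m := m) (n := n)
    (fun k hk => ?_) (fun k hk => ?_)
  · rw [← pow_eq_modeₗ_pow_apply]; exact hv k hk
  · rw [modeₗ_neg_one_smul_one_add, add_sub_cancel_right, ← pow_eq_modeₗ_pow_apply]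
    exact hy k hk

lemma pow_mem_of_mem_rad {M : Set V} {v : V} (hv : v ∈ VA.rad M) :
    ∃ m, ∀ k, m ≤ k → VA.pow v k ∈ M := by
  obtain ⟨m, hm⟩ := hv
  refine ⟨m + 1, fun k hk => ?_⟩
  obtain ⟨t, rfl⟩ : ∃ t, k = t + 1 := ⟨k - 1, by omega⟩
  rw [← word_replicate_neg_one]
  exact hm _ (fun n hn => .inr (List.eq_of_mem_replicate hn)) (by simp; omega)

end VertexAlgebra

namespace VertexOperatorAlgebra

open DirectSum

variable {V : Type} [AddCommGroup V] [Module ℂ V] (W : VertexOperatorAlgebra V)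

instance : Decomposition W.grade := W.internal.chooseDecomposition

lemma isHomogeneous_C2 : W.C2.IsHomogeneous W.grade := by
  refine Submodule.isHomogeneous_span W.grade ?_
  rintro _ ⟨u, w, rfl⟩ i
  induction u using Decomposition.inductionOn W.grade with
  | zero => simp
  | @homogeneous k u =>
    induction w using Decomposition.inductionOn W.grade with
    | zero => simp
    | @homogeneous n w =>
      have huw := W.mode_grade (m := -2) u.2 w.2
      by_cases h : k + n - -2 - 1 = i
      · rw [decompose_of_mem_same W.grade (h ▸ huw)]
        exact W.mode_neg_two_mem_C2 _ _
      · rw [decompose_of_mem_ne W.grade huw h]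
        exact W.C2.zero_mem
    | add w w' hw hw' =>
      rw [W.mode_add_right, decompose_add, DirectSum.add_apply, Submodule.coe_add]
      exact add_mem hw hw'
  | add u u' hu hu' =>
    rw [W.mode_add_left, decompose_add, DirectSum.add_apply, Submodule.coe_add]
    exact add_mem hu hu'

def gradeGE (a : ℤ) : Submodule ℂ V := ⨆ (n : ℤ) (_ : a ≤ n), W.grade n

lemma gradeGE_antitone : Antitone W.gradeGE := fun _ _ hab =>
  iSup₂_le fun n hn => le_iSup₂ (f := fun n (_ : _ ≤ n) => W.grade n) n (hab.trans hn)

lemma exists_gradeGE_le_C2 [FiniteDimensional ℂ (V ⧸ W.C2)] : ∃ N : ℕ, W.gradeGE N ≤ W.C2 := by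
  obtain ⟨b, hb⟩ := (W.isHomogeneous_C2.finite_setOf_not_le W.grade).bddAbove
  refine ⟨b.toNat + 1, iSup₂_le fun n hn => ?_⟩
  by_contra h
  have := hb h
  omega

lemma map₂_modeₗ_gradeGE_le (a b : ℤ) :
    Submodule.map₂ (W.modeₗ (-1)) (W.gradeGE a) (W.gradeGE b) ≤ W.gradeGE (a + b) := by
  simp only [gradeGE, Submodule.map₂_iSup_left, Submodule.map₂_iSup_right]
  refine iSup₂_le fun m hm => iSup₂_le fun n hn => Submodule.map₂_le.2 fun x hx y hy => ?_
  have hxy := W.mode_grade (m := -1) hx hy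
  exact le_iSup₂ (f := fun n (_ : a + b ≤ n) => W.grade n) (m + n) (by omega)
    (by simpa [add_comm] using hxy)

lemma pow_mem_gradeGE {y : V} (hy : y ∈ W.gradeGE 1) (k : ℕ) : W.pow y k ∈ W.gradeGE k := by
  induction k with
  | zero => exact le_iSup₂ (f := fun n (_ : 0 ≤ n) => W.grade n) 0 le_rfl W.one_mem
  | succ k ih =>
    have := W.map₂_modeₗ_gradeGE_le 1 k (Submodule.apply_mem_map₂ _ hy ih)
    rwa [add_comm, ← Nat.cast_succ] at this

lemma exists_eq_smul_one_add (hneg : ∀ n : ℤ, n < 0 → W.grade n = ⊥)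
    (hzero : W.grade 0 = Submodule.span ℂ {W.one}) (x : V) :
    ∃ (c : ℂ) (y : V), y ∈ W.gradeGE 1 ∧ x = c • W.one + y := by
  have htop : ⊤ ≤ W.grade 0 ⊔ W.gradeGE 1 := by
    rw [← W.internal.submodule_iSup_eq_top]
    refine iSup_le fun n => ?_
    rcases lt_trichotomy n 0 with h | rfl | h
    · simp [hneg n h]
    · exact le_sup_left
    · exact le_sup_of_le_right (le_iSup₂ (f := fun n (_ : 1 ≤ n) => W.grade n) n h)
  obtain ⟨z, hz, y, hy, rfl⟩ := Submodule.mem_sup.1 (htop (Submodule.mem_top (x := x)))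
  obtain ⟨c, rfl⟩ := Submodule.mem_span_singleton.1 (hzero ▸ hz)
  exact ⟨c, y, hy, rfl⟩

end VertexOperatorAlgebra

/-- Let `V` be a CFT-type `C₂`-cofinite vertex operator algebra and `M` a
subspace with `C₂(V) ⊆ M` and `𝟙 ∉ M`. Then `M` is a MZ_{0,-1}-subspace of `V` and
`r_{0,-1}(M) = ⊕_{n ≥ 1} V_n`. -/
theorem stmt18 {V : Type} [AddCommGroup V] [Module ℂ V] (VOA : VertexOperatorAlgebra V)
    (hneg : ∀ n : ℤ, n < 0 → VOA.grade n = ⊥)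
    (hzero : VOA.grade 0 = Submodule.span ℂ {VOA.one})
    (hc2 : FiniteDimensional ℂ (V ⧸ VOA.toVertexAlgebra.C2))
    (M : Submodule ℂ V) (hM : VOA.toVertexAlgebra.C2 ≤ M) (hone : VOA.one ∉ M) :
    VOA.toVertexAlgebra.IsMZ (M : Set V) ∧
    VOA.toVertexAlgebra.rad (M : Set V) =
      ((⨆ (n : ℤ) (_ : 1 ≤ n), VOA.grade n : Submodule ℂ V) : Set V) := by
  obtain ⟨N, hN⟩ := VOA.exists_gradeGE_le_C2
  have hpow {y : V} (hy : y ∈ VOA.gradeGE 1) (k : ℕ) (hk : N ≤ k) : VOA.pow y k ∈ VOA.C2 :=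
    hN (VOA.gradeGE_antitone (by exact_mod_cast hk) (VOA.pow_mem_gradeGE hy k))
  have hsrad : (VOA.gradeGE 1 : Set V) ⊆ VOA.srad M := fun y hy =>
    VOA.mem_srad_of_pow_mem_C2 hM (hpow hy)
  have hrad : VOA.rad M ⊆ VOA.gradeGE 1 := by
    intro v hv
    obtain ⟨c, y, hy, rfl⟩ := VOA.exists_eq_smul_one_add hneg hzero v
    obtain rfl | hc := eq_or_ne c 0
    · simpa using hy
    obtain ⟨m, hm⟩ := VOA.pow_mem_of_mem_rad hv
    exact absurd (VOA.one_mem_of_pow_mem hc hm fun k hk => hM (hpow hy k hk)) hone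
  have hrad_eq : VOA.rad M = VOA.gradeGE 1 :=
    hrad.antisymm (hsrad.trans (VOA.srad_subset_rad M))
  exact ⟨(hrad_eq ▸ hsrad).antisymm (VOA.srad_subset_rad M), hrad_eq⟩
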